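/- For a (p,q)-shuffle s with i ∈ s(⌐) and j ∈ s(¬), the flip maps satisfy β_i(α_i(s)) = s and α_j(β_j(s)) = s; moreover i ∈ α_i(s)(¬) and j ∈ β_j(s)(⌐). -/

import Mathlib

def IsShuffle (p q : ℕ) (s : Fin (q + 2) → ℕ) : Prop :=
  s 0 = 0 ∧ s (Fin.last (q + 1)) = p ∧ ∀ i : Fin (q + 1), s i.castSucc ≤ s i.succ

/-- `s(⌐)`: `i = s_k + k - 1` with `s_{k-1} < s_k` for some `1 ≤ k ≤ q+1`. -/
def sL (p q : ℕ) (s : Fin (q + 2) → ℕ) : Set ℕ :=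
  {i | 0 < i ∧ i < p + q ∧
     ∃ k : Fin (q + 1), i = s k.succ + (k : ℕ) ∧ s k.castSucc < s k.succ}

/-- `s(¬)`: `i = s_k + k` with `s_k < s_{k+1}` for some `0 ≤ k ≤ q`. -/
def sN (p q : ℕ) (s : Fin (q + 2) → ℕ) : Set ℕ :=
  {i | 0 < i ∧ i < p + q ∧
     ∃ k : Fin (q + 1), i = s k.castSucc + (k : ℕ) ∧ s k.castSucc < s k.succ}

/-!
Decreasing the corner entry `s_{k+1}` of a shuffle with `s_k < s_{k+1}` keeps it monotone,
and the same label `i = s_{k+1} + k` is then read off at the index `k+1` as `s'_{k+1} + (k+1)`,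
where now `s'_{k+1} < s'_{k+2}`; the condition `i < p + q` rules out the last entry, which is
pinned to `p`. Increasing `s_l` is the mirror image, with `0 < j` ruling out the first entry.
Undoing either flip is `n - 1 + 1 = n` resp. `n + 1 - 1 = n`.
-/

open Function

theorem Monotone.update {α β : Type*} [PartialOrder α] [Preorder β] [DecidableEq α]
    {f : α → β} (hf : Monotone f) {a : α} {v : β} (hlo : ∀ b < a, f b ≤ v)
    (hhi : ∀ b, a < b → v ≤ f b) : Monotone (update f a v) := by
  intro x y hxy
  rcases eq_or_ne x a with rfl | hx
  · rcases eq_or_ne y x with rfl | hy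
    · exact le_rfl
    · rw [update_self, update_of_ne hy]
      exact hhi y (lt_of_le_of_ne hxy hy.symm)
  · rcases eq_or_ne y a with rfl | hy
    · rw [update_self, update_of_ne hx]
      exact hlo x (lt_of_le_of_ne hxy hx)
    · rw [update_of_ne hx, update_of_ne hy]
      exact hf hxy

theorem update_update_sub_one_add_one {α : Type*} [DecidableEq α] (f : α → ℕ) {a : α}
    (h : 0 < f a) : update (update f a (f a - 1)) a (update f a (f a - 1) a + 1) = f := by
  rw [update_self, update_idem, Nat.sub_add_cancel h, update_eq_self]

theorem update_update_add_one_sub_one {α : Type*} [DecidableEq α] (f : α → ℕ) (a : α) :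
    update (update f a (f a + 1)) a (update f a (f a + 1) a - 1) = f := by
  rw [update_self, update_idem, Nat.add_sub_cancel, update_eq_self]

theorem isShuffle_iff {p q : ℕ} {s : Fin (q + 2) → ℕ} :
    IsShuffle p q s ↔ s 0 = 0 ∧ s (Fin.last (q + 1)) = p ∧ Monotone s := by
  rw [Fin.monotone_iff_le_succ]
  rfl

section Flips

variable {p q : ℕ} {s : Fin (q + 2) → ℕ}

theorem mem_sN_update_succ_sub_one (hs : Monotone s) {k : Fin (q + 1)}
    (hk : k.succ ≠ Fin.last (q + 1)) (hlt : s k.castSucc < s k.succ) {i : ℕ}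
    (hi : i = s k.succ + k) (hi0 : 0 < i) (hip : i < p + q) :
    i ∈ sN p q (update s k.succ (s k.succ - 1)) := by
  obtain ⟨k', hk'⟩ := Fin.exists_castSucc_eq.2 hk
  have hval : (k' : ℕ) = k + 1 := by simpa using congrArg Fin.val hk'
  have hne : k'.succ ≠ k.succ := hk' ▸ k'.castSucc_lt_succ.ne'
  have hle : s k.succ ≤ s k'.succ := hs (hk' ▸ k'.castSucc_lt_succ.le)
  refine ⟨hi0, hip, k', ?_, ?_⟩
  · rw [hk', update_self]
    omega
  · rw [hk', update_self, update_of_ne hne]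
    omega

theorem mem_sL_update_castSucc_add_one (hs : Monotone s) {l : Fin (q + 1)}
    (hl : l.castSucc ≠ 0) {j : ℕ} (hj : j = s l.castSucc + l) (hj0 : 0 < j) (hjp : j < p + q) :
    j ∈ sL p q (update s l.castSucc (s l.castSucc + 1)) := by
  obtain ⟨l', hl'⟩ := Fin.exists_succ_eq.2 hl
  have hval : (l' : ℕ) + 1 = l := by simpa using congrArg Fin.val hl'
  have hne : l'.castSucc ≠ l.castSucc := hl' ▸ l'.castSucc_lt_succ.ne
  have hle : s l'.castSucc ≤ s l.castSucc := hs (hl' ▸ l'.castSucc_lt_succ.le)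
  refine ⟨hj0, hjp, l', ?_, ?_⟩
  · rw [hl', update_self]
    omega
  · rw [hl', update_self, update_of_ne hne]
    omega

namespace IsShuffle

theorem succ_ne_last (hs : IsShuffle p q s) {k : Fin (q + 1)} (h : s k.succ + k < p + q) :
    k.succ ≠ Fin.last (q + 1) := by
  intro hk
  have hval : (k : ℕ) = q := by simpa using congrArg Fin.val hk
  rw [hk, hs.2.1] at h
  omega

theorem castSucc_ne_zero (hs : IsShuffle p q s) {l : Fin (q + 1)} (h : 0 < s l.castSucc + l) :
    l.castSucc ≠ 0 := by
  intro hl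
  have hval : (l : ℕ) = 0 := by simpa using congrArg Fin.val hl
  rw [hl, hs.1] at h
  omega

theorem update_succ_sub_one (hs : IsShuffle p q s) {k : Fin (q + 1)}
    (hk : k.succ ≠ Fin.last (q + 1)) (hlt : s k.castSucc < s k.succ) :
    IsShuffle p q (update s k.succ (s k.succ - 1)) := by
  obtain ⟨h0, hlast, hmono⟩ := isShuffle_iff.1 hs
  refine isShuffle_iff.2 ⟨?_, ?_, hmono.update (fun b hb => ?_) (fun b hb => ?_)⟩
  · rwa [update_of_ne (Fin.succ_ne_zero k).symm]
  · rwa [update_of_ne hk.symm]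
  · have := hmono (Fin.le_castSucc_iff.2 hb)
    omega
  · have := hmono hb.le
    omega

theorem update_castSucc_add_one (hs : IsShuffle p q s) {l : Fin (q + 1)}
    (hl : l.castSucc ≠ 0) (hlt : s l.castSucc < s l.succ) :
    IsShuffle p q (update s l.castSucc (s l.castSucc + 1)) := by
  obtain ⟨h0, hlast, hmono⟩ := isShuffle_iff.1 hs
  refine isShuffle_iff.2 ⟨?_, ?_, hmono.update (fun b hb => ?_) (fun b hb => ?_)⟩
  · rwa [update_of_ne hl.symm]
  · rwa [update_of_ne (Fin.castSucc_lt_last l).ne']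
  · have := hmono hb.le
    omega
  · have := hmono (Fin.castSucc_lt_iff_succ_le.1 hb)
    omega

end IsShuffle

end Flips

/-- For a `(p,q)`-shuffle `s` with `i ∈ s(⌐)` (witnessed by the index `k+1`, so
`i = s_{k+1} + k` and `s_k < s_{k+1}`), the corner flip `α_i(s)` (decreasing `s_{k+1}`
by one) is again a shuffle, `i ∈ α_i(s)(¬)`, and `β_i(α_i(s)) = s`; symmetrically for
`j ∈ s(¬)` the flip `β_j(s)` is a shuffle, `j ∈ β_j(s)(⌐)`, and `α_j(β_j(s)) = s`. -/
theorem flip_inverse (p q : ℕ) (s : Fin (q + 2) → ℕ) (hs : IsShuffle p q s) :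
    (∀ (k : Fin (q + 1)) (i : ℕ), i = s k.succ + (k : ℕ) → s k.castSucc < s k.succ →
      0 < i → i < p + q →
      IsShuffle p q (Function.update s k.succ (s k.succ - 1)) ∧
      i ∈ sN p q (Function.update s k.succ (s k.succ - 1)) ∧
      Function.update (Function.update s k.succ (s k.succ - 1)) k.succ
        ((Function.update s k.succ (s k.succ - 1)) k.succ + 1) = s) ∧
    (∀ (l : Fin (q + 1)) (j : ℕ), j = s l.castSucc + (l : ℕ) → s l.castSucc < s l.succ →
      0 < j → j < p + q →
      IsShuffle p q (Function.update s l.castSucc (s l.castSucc + 1)) ∧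
      j ∈ sL p q (Function.update s l.castSucc (s l.castSucc + 1)) ∧
      Function.update (Function.update s l.castSucc (s l.castSucc + 1)) l.castSucc
        ((Function.update s l.castSucc (s l.castSucc + 1)) l.castSucc - 1) = s) := by
  have hmono := (isShuffle_iff.1 hs).2.2
  refine ⟨fun k i hi hlt hi0 hip => ?_, fun l j hj hlt hj0 hjp => ?_⟩
  · have hk := hs.succ_ne_last (hi ▸ hip)
    exact ⟨hs.update_succ_sub_one hk hlt, mem_sN_update_succ_sub_one hmono hk hlt hi hi0 hip,
      update_update_sub_one_add_one s (by omega)⟩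
  · have hl := hs.castSucc_ne_zero (hj ▸ hj0)
    exact ⟨hs.update_castSucc_add_one hl hlt, mem_sL_update_castSucc_add_one hmono hl hj hj0 hjp,
      update_update_add_one_sub_one s _⟩
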